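/- arXiv:2501.01567 — 2 statements merged into one kernel-verified Lean document; each statement's English description precedes it below -/
import Mathlib

section
/- Let K ⊆ L be a finite field extension. Then L is separable over K if and only if the module of Kähler differentials Ω_{L/K} is zero. -/
universe u v

/-- A copy of `K` in a higher universe, without `ULift`'s scalar-action instances. -/
def AuxCopy (K : Type u) : Type (max u v) := ULift.{v} K

section Aux

variable (K : Type u) (L : Type v) [Field K] [Field L] [Algebra K L]

instance : Field (AuxCopy.{u, v} K) := inferInstanceAs (Field (ULift K))

/-- The ring equivalence between the copy and the original. -/
def auxEquiv : AuxCopy.{u, v} K ≃+* K := ULift.ringEquiv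

noncomputable local instance instKL' : Algebra K (AuxCopy.{v, u} L) :=
  (((auxEquiv L).symm.toRingHom).comp (algebraMap K L)).toAlgebra

noncomputable local instance instK'L' : Algebra (AuxCopy.{u, v} K) (AuxCopy.{v, u} L) :=
  ((algebraMap K (AuxCopy.{v, u} L)).comp (auxEquiv K).toRingHom).toAlgebra

noncomputable local instance instK'K : Algebra (AuxCopy.{u, v} K) K :=
  ((auxEquiv K).toRingHom).toAlgebra

local instance : IsScalarTower (AuxCopy.{u, v} K) K (AuxCopy.{v, u} L) :=
  IsScalarTower.of_algebraMap_eq (fun _ => rfl)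

/-- `L` and its copy are isomorphic as `K`-algebras. -/
noncomputable def auxAlgEquiv : AuxCopy.{v, u} L ≃ₐ[K] L :=
  AlgEquiv.ofRingEquiv (f := auxEquiv L) (fun x => by
    exact (auxEquiv L).apply_symm_apply _)

lemma aux_unramified_iff :
    Algebra.FormallyUnramified (AuxCopy.{u, v} K) (AuxCopy.{v, u} L) ↔
      Algebra.FormallyUnramified K L := by
  rw [← Algebra.FormallyUnramified.iff_of_equiv (auxAlgEquiv K L)]
  constructor
  · intro h
    exact Algebra.FormallyUnramified.of_restrictScalars (AuxCopy.{u, v} K) K (AuxCopy.{v, u} L)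
  · intro h
    have h1 : Algebra.FormallyUnramified (AuxCopy.{u, v} K) K :=
      Algebra.FormallyUnramified.of_equiv
        (AlgEquiv.ofRingEquiv (f := auxEquiv K) (fun x => rfl))
    exact Algebra.FormallyUnramified.comp (AuxCopy.{u, v} K) K (AuxCopy.{v, u} L)

lemma aux_separable_iff :
    Algebra.IsSeparable (AuxCopy.{u, v} K) (AuxCopy.{v, u} L) ↔
      Algebra.IsSeparable K L := by
  constructor
  · intro h
    exact Algebra.IsSeparable.of_equiv_equiv (auxEquiv K) (auxEquiv L)
      (by ext x; exact ((auxEquiv.{v, u} L).apply_symm_apply _).symm)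
  · intro h
    exact Algebra.IsSeparable.of_equiv_equiv (auxEquiv K).symm (auxEquiv L).symm
      (by ext x; rfl)

lemma aux_finite [FiniteDimensional K L] :
    FiniteDimensional (AuxCopy.{u, v} K) (AuxCopy.{v, u} L) := by
  have h1 : Module.Finite (AuxCopy.{u, v} K) K :=
    Module.Finite.of_surjective
      (Algebra.linearMap (AuxCopy.{u, v} K) K) (auxEquiv K).surjective
  have h2 : Module.Finite K (AuxCopy.{v, u} L) :=
    Module.Finite.equiv (auxAlgEquiv K L).symm.toLinearEquiv
  exact Module.Finite.trans K (AuxCopy.{v, u} L)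

lemma aux_main [FiniteDimensional K L] :
    Algebra.IsSeparable K L ↔ Subsingleton (Ω[L⁄K]) := by
  haveI := aux_finite K L
  rw [← aux_separable_iff K L,
    ← Algebra.FormallyUnramified.iff_isSeparable (K := AuxCopy.{u, v} K) (AuxCopy.{v, u} L),
    aux_unramified_iff K L]
  constructor
  · intro h; exact h.subsingleton_kaehlerDifferential
  · intro h; exact ⟨h⟩

end Aux

/-- A finite field extension `L/K` is separable iff the module of Kähler differentials
`Ω_{L/K}` vanishes. -/
theorem separable_iff_kaehlerDifferential_eq_zero (K L : Type*) [Field K] [Field L]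
    [Algebra K L] [FiniteDimensional K L] :
    Algebra.IsSeparable K L ↔ Subsingleton (Ω[L⁄K]) :=
  aux_main K L
end

section
/- Let (A, m) be a local ring containing a field k of characteristic zero, and suppose f, g ∈ m have k-linearly independent images in m/m². Then t·(df ∧ dg) + g·(df ∧ dt) ≠ 0 in Ω²_{A[t]/k}, i.e., df ∧ d(gt) ≠ 0. -/
open Polynomial IsLocalRing

section Aux

variable {R B A L M : Type*}

/-- Pull back a derivation along an algebra hom, given a compatible module structure. -/
noncomputable def pullbackDerivation [CommRing R] [CommRing A] [CommRing B]
    [Algebra R A] [Algebra R B] (ψ : B →ₐ[R] A) [AddCommGroup M] [Module R M]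
    [Module A M] [Module B M]
    (hsmul : ∀ (b : B) (m : M), b • m = ψ b • m) (δ : Derivation R A M) :
    Derivation R B M where
  toFun b := δ (ψ b)
  map_add' a b := by simp
  map_smul' r b := by simp [map_smul]
  map_one_eq_zero' := by simp
  leibniz' a b := by
    show δ (ψ (a * b)) = a • δ (ψ b) + b • δ (ψ a)
    rw [map_mul, Derivation.leibniz, hsmul, hsmul]

@[simp] lemma pullbackDerivation_apply [CommRing R] [CommRing A] [CommRing B]
    [Algebra R A] [Algebra R B] (ψ : B →ₐ[R] A) [AddCommGroup M] [Module R M]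
    [Module A M] [Module B M]
    (hsmul : ∀ (b : B) (m : M), b • m = ψ b • m) (δ : Derivation R A M) (b : B) :
    pullbackDerivation ψ hsmul δ b = δ (ψ b) := rfl

/-- The alternating 2-form `v ↦ φ(v 0) ψ(v 1) - φ(v 1) ψ(v 0)`. -/
noncomputable def wedgeForm [CommRing R] [AddCommGroup M] [Module R M]
    [CommRing L] [Algebra R L] (φ ψ : M →ₗ[R] L) : M [⋀^Fin 2]→ₗ[R] L where
  toFun v := φ (v 0) * ψ (v 1) - φ (v 1) * ψ (v 0)
  map_update_add' := by
    intro _ v i x y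
    fin_cases i <;>
      simp [Function.update_apply, Fin.ext_iff, Matrix.cons_val_zero, Matrix.cons_val_one] <;>
      ring
  map_update_smul' := by
    intro _ v i c x
    fin_cases i <;>
      simp [Function.update_apply, Fin.ext_iff, Algebra.smul_def] <;>
      ring
  map_eq_zero_of_eq' := by
    intro v i j hv hij
    have h01 : v 0 = v 1 := by
      fin_cases i <;> fin_cases j <;> simp_all
    show φ (v 0) * ψ (v 1) - φ (v 1) * ψ (v 0) = 0
    rw [h01]
    ring

@[simp] lemma wedgeForm_apply [CommRing R] [AddCommGroup M] [Module R M]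
    [CommRing L] [Algebra R L] (φ ψ : M →ₗ[R] L) (v : Fin 2 → M) :
    wedgeForm φ ψ v = φ (v 0) * ψ (v 1) - φ (v 1) * ψ (v 0) := rfl

/-- The family of alternating forms supported in degree 2. -/
noncomputable def wedgeFam [CommRing R] [AddCommGroup M] [Module R M]
    [CommRing L] [Algebra R L] (φ ψ : M →ₗ[R] L) :
    ∀ i : ℕ, M [⋀^Fin i]→ₗ[R] L
  | 2 => wedgeForm φ ψ
  | _ => 0

lemma liftAlternating_wedge [CommRing R] [AddCommGroup M] [Module R M]
    [CommRing L] [Algebra R L] (φ ψ : M →ₗ[R] L) (a b : M) :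
    ExteriorAlgebra.liftAlternating (wedgeFam φ ψ)
        (ExteriorAlgebra.ι R a * ExteriorAlgebra.ι R b) =
      φ a * ψ b - φ b * ψ a := by
  rw [ExteriorAlgebra.liftAlternating_ι_mul, ExteriorAlgebra.liftAlternating_ι]
  show (wedgeForm φ ψ).curryLeft a ![b] = _
  simp

end Aux

universe u v

section CoeffField

variable (k : Type u) (B : Type v) [Field k] [CharZero k] [CommRing B] [Algebra k B]
  [IsLocalRing B]

/-- In a local ring whose maximal ideal squares to zero, containing a field of
characteristic zero, there is a ring section of the residue map compatible with `k`. -/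
theorem exists_residue_section
    (hsq : ∀ x ∈ maximalIdeal B, ∀ y ∈ maximalIdeal B, x * y = 0) :
    ∃ s : ResidueField B →+* B, (∀ z, residue B (s z) = z) ∧
      (∀ c : k, s (algebraMap k (ResidueField B) c) = algebraMap k B c) := by
  classical
  haveI : IsScalarTower k B (ResidueField B) := IsScalarTower.of_algebraMap_eq (fun c => rfl)
  -- the set of subfields
  set S : Set (Subalgebra k B) := {F | IsField F} with hS
  have hbot : (⊥ : Subalgebra k B) ∈ S := by
    have hinj : Function.Injective (algebraMap k B) := RingHom.injective _
    refine (Algebra.botEquivOfInjective hinj).toMulEquiv.isField (Field.toIsField k)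
  -- Zorn's lemma
  obtain ⟨F, -, hFS, hFmax⟩ := zorn_le_nonempty₀ S (fun c hcS hchain F₀ hF₀ => by
    -- upper bound of a nonempty chain
    haveI : Nonempty c := ⟨⟨F₀, hF₀⟩⟩
    have hdir : Directed (· ≤ ·) (fun i : c => (i : Subalgebra k B)) :=
      hchain.directedOn.directed_val
    refine ⟨sSup c, ?_, fun z hz => le_sSup hz⟩
    have hmem : ∀ x : B, x ∈ sSup c ↔ ∃ i : c, x ∈ (i : Subalgebra k B) := by
      intro x
      rw [sSup_eq_iSup']
      constructor
      · intro hx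
        have hx' : x ∈ (↑(⨆ i : c, (i : Subalgebra k B)) : Set B) := hx
        rw [Subalgebra.coe_iSup_of_directed hdir] at hx'
        simpa using hx'
      · rintro ⟨i, hi⟩
        exact (le_iSup (fun i : c => (i : Subalgebra k B)) i) hi
    refine ⟨⟨0, 1, fun h => zero_ne_one (congrArg Subtype.val h)⟩, mul_comm, ?_⟩
    rintro ⟨a, ha⟩ ha0
    obtain ⟨i, hai⟩ := (hmem a).mp ha
    have hiF : IsField ((i : Subalgebra k B)) := hcS i.2
    have ha0' : (⟨a, hai⟩ : (i : Subalgebra k B)) ≠ 0 := by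
      intro h
      have hval : a = (0 : B) := congrArg Subtype.val h
      exact ha0 (Subtype.ext hval)
    obtain ⟨b, hb⟩ := hiF.mul_inv_cancel ha0'
    refine ⟨⟨(b : B), (hmem _).mpr ⟨i, b.2⟩⟩, ?_⟩
    exact Subtype.ext (by simpa using congrArg Subtype.val hb)) ⊥ hbot
  -- F is a maximal subfield; show the residue map restricted to F is bijective
  letI : Field F := hFS.toField
  haveI : CharZero F := charZero_of_injective_algebraMap (RingHom.injective (algebraMap k F))
  haveI : IsScalarTower F B (ResidueField B) := IsScalarTower.of_algebraMap_eq (fun _ => rfl)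
  have hsurj : Function.Surjective (algebraMap F (ResidueField B)) := by
    by_contra hns
    rw [Function.Surjective] at hns
    push_neg at hns
    obtain ⟨y, hy⟩ := hns
    obtain ⟨x, hx⟩ := Ideal.Quotient.mk_surjective (I := maximalIdeal B) y
    have hπx : IsScalarTower.toAlgHom F B (ResidueField B) x = y := hx
    -- the residue map as an F-algebra hom
    let π : B →ₐ[F] ResidueField B := IsScalarTower.toAlgHom F B (ResidueField B)
    have hπ : ∀ (z : B) (p : Polynomial F), π (aeval z p) = aeval (π z) p := fun z p =>
      (Polynomial.aeval_algHom_apply π z p).symm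
    have hunit : ∀ z : B, π z ≠ 0 → IsUnit z := by
      intro z hz
      by_contra hzu
      exact hz (Ideal.Quotient.eq_zero_iff_mem.mpr ((mem_maximalIdeal z).mpr hzu))
    by_cases halg : IsAlgebraic F y
    · -- algebraic case : Newton correction
      have hyint : IsIntegral F y := halg.isIntegral
      set μ := minpoly F y with hμ
      have hroot : aeval y μ = 0 := minpoly.aeval _ _
      have hμne : μ ≠ 0 := minpoly.ne_zero hyint
      have hdeg : 0 < μ.natDegree := minpoly.natDegree_pos hyint
      have hμ' : derivative μ ≠ 0 := by
        intro h
        rw [Polynomial.eq_C_of_derivative_eq_zero h] at hdeg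
        simp at hdeg
      have hder : aeval y (derivative μ) ≠ 0 := by
        intro h
        exact absurd (minpoly.degree_le_of_ne_zero F y hμ' h)
          (not_le.mpr (Polynomial.degree_derivative_lt hμne))
      have hb1u : IsUnit (aeval x (derivative μ)) := by
        refine hunit _ ?_
        rw [hπ]
        show aeval (π x) (derivative μ) ≠ 0
        rw [hπx]
        exact hder
      set b0 := aeval x μ with hb0def
      have hb0m : b0 ∈ maximalIdeal B := by
        rw [← Ideal.Quotient.eq_zero_iff_mem]
        show π b0 = 0
        rw [hb0def, hπ]
        show aeval (π x) μ = 0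
        rw [hπx, hroot]
      set x' := x - b0 * ↑hb1u.unit⁻¹ with hx'
      have hh : x' = x + -(b0 * ↑hb1u.unit⁻¹) := by ring
      have hhm : -(b0 * ↑hb1u.unit⁻¹) ∈ maximalIdeal B :=
        neg_mem (Ideal.mul_mem_right _ _ hb0m)
      have hπx' : π x' = y := by
        have : π (-(b0 * ↑hb1u.unit⁻¹)) = 0 := Ideal.Quotient.eq_zero_iff_mem.mpr hhm
        rw [hh, map_add, this, add_zero]
        exact hπx
      have hroot' : aeval x' μ = 0 := by
        obtain ⟨kk, hkk⟩ :=
          Polynomial.binomExpansion (μ.map (algebraMap F B)) x (-(b0 * ↑hb1u.unit⁻¹))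
        have e1 : ∀ z : B, (μ.map (algebraMap F B)).eval z = aeval z μ := by
          intro z; rw [Polynomial.aeval_def, Polynomial.eval_map]
        have e2 : ∀ z : B, (derivative (μ.map (algebraMap F B))).eval z
            = aeval z (derivative μ) := by
          intro z; rw [Polynomial.derivative_map, Polynomial.aeval_def, Polynomial.eval_map]
        rw [← hh] at hkk
        rw [e1, e1, e2] at hkk
        have hzero : (-(b0 * ↑hb1u.unit⁻¹)) ^ 2 = 0 := by
          rw [pow_two]
          exact hsq _ hhm _ hhm
        rw [hzero, mul_zero, add_zero] at hkk
        rw [hkk, ← hb0def]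
        have : aeval x (derivative μ) * -(b0 * ↑hb1u.unit⁻¹) = -b0 := by
          have huu : (hb1u.unit : B) = aeval x (derivative μ) := hb1u.unit_spec
          calc aeval x (derivative μ) * -(b0 * ↑hb1u.unit⁻¹)
              = -(b0 * ((hb1u.unit : B) * ↑hb1u.unit⁻¹)) := by rw [huu]; ring
            _ = -b0 := by rw [Units.mul_inv, mul_one]
        rw [this, add_neg_cancel]
      -- the new subfield F[x']
      set F' : Subalgebra k B := (Algebra.adjoin F ({x'} : Set B)).restrictScalars k with hF'
      have hmemF' : ∀ b : B, b ∈ F' ↔ ∃ p : Polynomial F, aeval x' p = b := by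
        intro b
        rw [hF', Subalgebra.mem_restrictScalars, Algebra.adjoin_singleton_eq_range_aeval,
          AlgHom.mem_range]
      haveI : (Ideal.span {μ}).IsMaximal :=
        PrincipalIdealRing.isMaximal_of_irreducible (minpoly.irreducible hyint)
      have haeval_span : ∀ p ∈ Ideal.span {μ}, aeval x' p = 0 := by
        intro p hp
        obtain ⟨c, hc⟩ := Ideal.mem_span_singleton'.mp hp
        have hmul := map_mul (Polynomial.aeval x' : (↥F)[X] →ₐ[↥F] B) c μ
        rw [← hc, hmul, hroot', mul_zero]
      have hF'field : IsField F' := by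
        refine ⟨⟨0, 1, fun h => zero_ne_one (congrArg Subtype.val h)⟩, mul_comm, ?_⟩
        rintro ⟨a, ha⟩ ha0
        obtain ⟨p, hp⟩ := (hmemF' a).mp ha
        have hpnot : p ∉ Ideal.span {μ} := by
          intro hmem
          apply ha0
          apply Subtype.ext
          show a = 0
          rw [← hp]
          exact haeval_span p hmem
        obtain ⟨q, i, hi, hqi⟩ := Ideal.IsMaximal.exists_inv ‹_› hpnot
        have hq2 := map_add (Polynomial.aeval x' : (↥F)[X] →ₐ[↥F] B) (q * p) i
        have hq3 := map_mul (Polynomial.aeval x' : (↥F)[X] →ₐ[↥F] B) q p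
        have hone : aeval x' (q * p + i) = 1 := by
          rw [hqi]
          exact map_one (Polynomial.aeval x' : (↥F)[X] →ₐ[↥F] B)
        rw [hq2, hq3, haeval_span i hi, add_zero, hp] at hone
        refine ⟨⟨aeval x' q, (hmemF' _).mpr ⟨q, rfl⟩⟩, Subtype.ext ?_⟩
        show a * aeval x' q = 1
        rw [mul_comm]
        exact hone
      have hFle : F ≤ F' := by
        intro z hz
        rw [hmemF']
        exact ⟨C ⟨z, hz⟩, aeval_C _ _⟩
      have : F' ≤ F := hFmax hF'field hFle
      have hx'F : x' ∈ F := this ((hmemF' x').mpr ⟨X, aeval_X _⟩)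
      exact hy ⟨x', hx'F⟩ hπx'
    · -- transcendental case : localize the polynomial ring
      have htr : ∀ p : Polynomial F, aeval y p = 0 → p = 0 := by
        intro p hp
        by_contra hne
        exact halg ⟨p, hne, hp⟩
      have hunit' : ∀ z ∈ Algebra.adjoin F ({x} : Set B), z ≠ 0 → IsUnit z := by
        intro z hz hzne
        rw [Algebra.adjoin_singleton_eq_range_aeval, AlgHom.mem_range] at hz
        obtain ⟨p, hp⟩ := hz
        refine hunit z ?_
        intro h0
        apply hzne
        have : aeval y p = 0 := by
          rw [← hπx]
          show aeval (π x) p = 0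
          rw [← hπ, hp, h0]
        rw [← hp, htr p this, map_zero]
      set T : Subalgebra k B :=
        { carrier := {b : B | ∃ u v : B, u ∈ Algebra.adjoin F ({x} : Set B) ∧
            v ∈ Algebra.adjoin F ({x} : Set B) ∧ IsUnit v ∧ b * v = u}
          mul_mem' := by
            rintro a b ⟨u₁, v₁, hu₁, hv₁, hvu₁, he₁⟩ ⟨u₂, v₂, hu₂, hv₂, hvu₂, he₂⟩
            exact ⟨u₁ * u₂, v₁ * v₂, mul_mem hu₁ hu₂, mul_mem hv₁ hv₂, hvu₁.mul hvu₂, by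
              rw [← he₁, ← he₂]; ring⟩
          one_mem' := ⟨1, 1, one_mem _, one_mem _, isUnit_one, one_mul 1⟩
          add_mem' := by
            rintro a b ⟨u₁, v₁, hu₁, hv₁, hvu₁, he₁⟩ ⟨u₂, v₂, hu₂, hv₂, hvu₂, he₂⟩
            exact ⟨u₁ * v₂ + u₂ * v₁, v₁ * v₂, add_mem (mul_mem hu₁ hv₂) (mul_mem hu₂ hv₁),
              mul_mem hv₁ hv₂, hvu₁.mul hvu₂, by rw [← he₁, ← he₂]; ring⟩
          zero_mem' := ⟨0, 1, zero_mem _, one_mem _, isUnit_one, zero_mul 1⟩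
          algebraMap_mem' := fun c => ⟨algebraMap k B c, 1, by
              rw [IsScalarTower.algebraMap_apply k F B c]
              exact Subalgebra.algebraMap_mem _ _, one_mem _, isUnit_one,
            mul_one _⟩ } with hT
      have hTfield : IsField T := by
        refine ⟨⟨0, 1, fun h => zero_ne_one (congrArg Subtype.val h)⟩, mul_comm, ?_⟩
        rintro ⟨a, u, v, hu, hv, hvu, he⟩ ha0
        have ha0' : a ≠ 0 := fun h => ha0 (Subtype.ext h)
        have hune : u ≠ 0 := by
          intro h0
          apply ha0'
          have hv : (hvu.unit : B) = v := hvu.unit_spec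
          calc a = a * v * ↑hvu.unit⁻¹ := by rw [mul_assoc, hvu.mul_val_inv, mul_one]
            _ = u * ↑hvu.unit⁻¹ := by rw [he]
            _ = 0 := by rw [h0, zero_mul]
        have huu : IsUnit u := hunit' u hu hune
        refine ⟨⟨v * ↑huu.unit⁻¹, v, u, hv, hu, huu, by
          calc v * ↑huu.unit⁻¹ * u = v * (u * ↑huu.unit⁻¹) := by ring
            _ = v := by rw [huu.mul_val_inv, mul_one]⟩, ?_⟩
        apply Subtype.ext
        show a * (v * ↑huu.unit⁻¹) = 1
        calc a * (v * ↑huu.unit⁻¹) = (a * v) * ↑huu.unit⁻¹ := by ring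
          _ = u * ↑huu.unit⁻¹ := by rw [he]
          _ = 1 := huu.mul_val_inv
      have hFle : F ≤ T := by
        intro z hz
        exact ⟨z, 1, (Algebra.adjoin F ({x} : Set B)).algebraMap_mem' ⟨z, hz⟩, one_mem _,
          isUnit_one, mul_one z⟩
      have : T ≤ F := hFmax hTfield hFle
      have hxF : x ∈ F := this ⟨x, 1, Algebra.subset_adjoin rfl, one_mem _, isUnit_one, mul_one x⟩
      exact hy ⟨x, hxF⟩ hπx
  -- now build the section
  have hinj : Function.Injective (algebraMap F (ResidueField B)) := RingHom.injective _
  let e : F ≃+* ResidueField B := RingEquiv.ofBijective (algebraMap F (ResidueField B)) ⟨hinj, hsurj⟩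
  refine ⟨((F.val : F →ₐ[k] B) : F →+* B).comp (e.symm : ResidueField B →+* F), ?_, ?_⟩
  · intro z
    exact e.apply_symm_apply z
  · intro c
    have h1 : algebraMap k (ResidueField B) c = algebraMap F (ResidueField B) (algebraMap k F c) := by
      show _ = algebraMap B (ResidueField B) (algebraMap F B (algebraMap k F c))
      rw [← IsScalarTower.algebraMap_apply k (↥F) B,
        IsScalarTower.algebraMap_apply k B (ResidueField B)]
    rw [RingHom.comp_apply, h1]
    have h2 : e.symm (algebraMap F (ResidueField B) (algebraMap k F c)) = algebraMap k F c :=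
      e.symm_apply_apply _
    show algebraMap F B (e.symm (algebraMap F (ResidueField B) (algebraMap k F c)))
      = algebraMap k B c
    rw [h2]
    exact (IsScalarTower.algebraMap_apply k (↥F) B c).symm

end CoeffField

section DualPair

/-- For a linearly independent pair in a vector space there is a dual functional. -/
theorem exists_dual_pair {K V : Type*} [Field K] [AddCommGroup V] [Module K V]
    {v w : V} (h : LinearIndependent K ![v, w]) :
    ∃ ℓ : V →ₗ[K] K, ℓ v = 1 ∧ ℓ w = 0 := by
  classical
  have hinj : Function.Injective ![v, w] := h.injective
  have hvw : v ≠ w := by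
    intro hvw
    have : (0 : Fin 2) = 1 := hinj (by simp [hvw])
    simp at this
  have hsub : LinearIndependent K ((↑) : Set.range ![v, w] → V) := h.linearIndepOn_id
  let b := Module.Basis.extend hsub
  have hvmem : v ∈ LinearIndepOn.extend (K := K) (v := id) (s := Set.range ![v, w]) hsub (Set.subset_univ _) :=
    LinearIndepOn.subset_extend (K := K) (v := id) (s := Set.range ![v, w]) hsub _ ⟨0, by simp⟩
  have hwmem : w ∈ LinearIndepOn.extend (K := K) (v := id) (s := Set.range ![v, w]) hsub (Set.subset_univ _) :=
    LinearIndepOn.subset_extend (K := K) (v := id) (s := Set.range ![v, w]) hsub _ ⟨1, by simp⟩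
  refine ⟨b.coord ⟨v, hvmem⟩, ?_, ?_⟩
  · have h1 : b.coord ⟨v, hvmem⟩ (b ⟨v, hvmem⟩) = 1 := by
      rw [Module.Basis.coord_apply, Module.Basis.repr_self, Finsupp.single_eq_same]
    rwa [show b ⟨v, hvmem⟩ = v from Module.Basis.extend_apply_self (s := Set.range ![v, w]) hsub _] at h1
  · have hne : (⟨w, hwmem⟩ : LinearIndepOn.extend (K := K) (v := id) (s := Set.range ![v, w]) hsub (Set.subset_univ _)) ≠ ⟨v, hvmem⟩ := by
      intro hc
      have hwv : w = v := by simpa using congrArg Subtype.val hc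
      exact hvw hwv.symm
    have h0 : b.coord ⟨v, hvmem⟩ (b ⟨w, hwmem⟩) = 0 := by
      rw [Module.Basis.coord_apply, Module.Basis.repr_self, Finsupp.single_apply, if_neg hne]
    rwa [show b ⟨w, hwmem⟩ = w from Module.Basis.extend_apply_self (s := Set.range ![v, w]) hsub _] at h0

end DualPair

theorem key_derivations (k : Type u) (A : Type v) [Field k] [CharZero k] [CommRing A]
    [Algebra k A] [IsLocalRing A]
    (f g : A) (hf : f ∈ maximalIdeal A) (hg : g ∈ maximalIdeal A)
    (hind : ∀ a b : A, a * f + b * g ∈ (maximalIdeal A) ^ 2 →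
      a ∈ maximalIdeal A ∧ b ∈ maximalIdeal A) :
    ∃ (L : Type v) (_ : Field L) (_ : Algebra k L) (_ : Algebra A L)
      (_ : IsScalarTower k A L) (δ₁ δ₂ : Derivation k A L),
      δ₁ f = 1 ∧ δ₁ g = 0 ∧ δ₂ f = 0 ∧ δ₂ g = 1 := by
  classical
  set I : Ideal A := maximalIdeal A ^ 2 with hI
  have hItop : I ≠ ⊤ := by
    intro htop
    have h1 : (1 : A) ∈ I := htop ▸ Submodule.mem_top
    have h2 : (1 : A) ∈ maximalIdeal A := Ideal.pow_le_self two_ne_zero h1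
    exact (maximalIdeal.isMaximal A).ne_top ((Ideal.eq_top_iff_one _).mpr h2)
  haveI : Nontrivial (A ⧸ I) := Ideal.Quotient.nontrivial_iff.mpr hItop
  haveI : IsLocalRing (A ⧸ I) :=
    IsLocalRing.of_surjective' (Ideal.Quotient.mk I) Ideal.Quotient.mk_surjective
  have hmem : ∀ a : A, Ideal.Quotient.mk I a ∈ maximalIdeal (A ⧸ I) ↔ a ∈ maximalIdeal A := by
    intro a
    constructor
    · intro h
      by_contra ha
      have hu : IsUnit a := by
        by_contra hu
        exact ha ((mem_maximalIdeal a).mpr hu)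
      exact (mem_maximalIdeal _).mp h (hu.map (Ideal.Quotient.mk I))
    · intro ha
      rw [mem_maximalIdeal, mem_nonunits_iff]
      intro hu
      obtain ⟨c, hc⟩ := hu.exists_right_inv
      obtain ⟨b, rfl⟩ := Ideal.Quotient.mk_surjective c
      rw [← map_mul, ← map_one (Ideal.Quotient.mk I)] at hc
      have hab : a * b - 1 ∈ I := Ideal.Quotient.eq.mp hc
      have h1 : (1 : A) ∈ maximalIdeal A := by
        have h2 : a * b - (a * b - 1) ∈ maximalIdeal A :=
          sub_mem (Ideal.mul_mem_right _ _ ha) (Ideal.pow_le_self two_ne_zero hab)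
        simpa using h2
      exact (maximalIdeal.isMaximal A).ne_top ((Ideal.eq_top_iff_one _).mpr h1)
  have hsq : ∀ x ∈ maximalIdeal (A ⧸ I), ∀ y ∈ maximalIdeal (A ⧸ I), x * y = 0 := by
    intro x hx y hy
    obtain ⟨a, rfl⟩ := Ideal.Quotient.mk_surjective x
    obtain ⟨b, rfl⟩ := Ideal.Quotient.mk_surjective y
    rw [hmem] at hx hy
    rw [← map_mul, Ideal.Quotient.eq_zero_iff_mem, hI, pow_two]
    exact Ideal.mul_mem_mul hx hy
  obtain ⟨s, hs1, hs2⟩ := exists_residue_section k (A ⧸ I) hsq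
  haveI : IsScalarTower k (A ⧸ I) (ResidueField (A ⧸ I)) :=
    IsScalarTower.of_algebraMap_eq fun c => rfl
  haveI : IsScalarTower k A (ResidueField (A ⧸ I)) :=
    IsScalarTower.of_algebraMap_eq fun c => rfl
  -- the target field
  set n : Ideal (A ⧸ I) := maximalIdeal (A ⧸ I) with hn
  -- K-module structure on n
  have htor : Module.IsTorsionBySet (A ⧸ I) ↥n ↑n := by
    intro x a
    exact Subtype.ext (hsq _ a.2 _ x.2)
  letI : Module (ResidueField (A ⧸ I)) ↥n := htor.module
  haveI : IsScalarTower (A ⧸ I) (ResidueField (A ⧸ I)) ↥n := Module.IsTorsionBySet.isScalarTower htor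
  -- the canonical derivation into n
  have hDmem : ∀ b : A ⧸ I, b - s (residue _ b) ∈ n := by
    intro b
    rw [hn, ← Ideal.Quotient.eq_zero_iff_mem]
    show residue _ (b - s (residue _ b)) = 0
    rw [map_sub, hs1, sub_self]
  let Dfun : A ⧸ I → ↥n := fun b => ⟨b - s (residue _ b), hDmem b⟩
  have hDadd : ∀ a b, Dfun (a + b) = Dfun a + Dfun b := by
    intro a b
    apply Subtype.ext
    show a + b - s (residue _ (a + b)) = (a - s (residue _ a)) + (b - s (residue _ b))
    rw [map_add, map_add]
    ring
  have hDsmul : ∀ (c : k) (b : A ⧸ I), Dfun (c • b) = c • Dfun b := by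
    intro c b
    apply Subtype.ext
    show c • b - s (residue _ (c • b)) = c • (b - s (residue _ b))
    have h1 : (c • b : A ⧸ I) = algebraMap k (A ⧸ I) c * b := Algebra.smul_def c b
    have h2 : residue (A ⧸ I) (algebraMap k (A ⧸ I) c) = algebraMap k (ResidueField (A ⧸ I)) c :=
      (IsScalarTower.algebraMap_apply k (A ⧸ I) (ResidueField (A ⧸ I)) c).symm
    rw [h1, map_mul, h2, map_mul, hs2 c, smul_sub, Algebra.smul_def c (s (residue _ b)),
      Algebra.smul_def c b]
  have hDleib : ∀ a b : A ⧸ I, Dfun (a * b) = a • Dfun b + b • Dfun a := by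
    intro a b
    apply Subtype.ext
    show a * b - s (residue _ (a * b)) =
      a * (b - s (residue _ b)) + b * (a - s (residue _ a))
    have hprod : (a - s (residue _ a)) * (b - s (residue _ b)) = 0 :=
      hsq _ (hDmem a) _ (hDmem b)
    rw [map_mul, map_mul]
    linear_combination -hprod
  let D : Derivation k (A ⧸ I) ↥n :=
    { toFun := Dfun
      map_add' := hDadd
      map_smul' := hDsmul
      map_one_eq_zero' := by
        apply Subtype.ext
        show (1 : A ⧸ I) - s (residue _ 1) = 0
        rw [map_one, map_one, sub_self]
      leibniz' := hDleib }
  -- the two elements of n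
  let vf : ↥n := ⟨Ideal.Quotient.mk I f, (hmem f).mpr hf⟩
  let vg : ↥n := ⟨Ideal.Quotient.mk I g, (hmem g).mpr hg⟩
  have hres0 : ∀ (a : A), a ∈ maximalIdeal A → residue (A ⧸ I) (Ideal.Quotient.mk I a) = 0 :=
    fun a ha => Ideal.Quotient.eq_zero_iff_mem.mpr ((hmem a).mpr ha)
  have hDf : D (Ideal.Quotient.mk I f) = vf := by
    apply Subtype.ext
    show Ideal.Quotient.mk I f - s (residue _ (Ideal.Quotient.mk I f)) = Ideal.Quotient.mk I f
    rw [hres0 f hf, map_zero, sub_zero]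
  have hDg : D (Ideal.Quotient.mk I g) = vg := by
    apply Subtype.ext
    show Ideal.Quotient.mk I g - s (residue _ (Ideal.Quotient.mk I g)) = Ideal.Quotient.mk I g
    rw [hres0 g hg, map_zero, sub_zero]
  -- linear independence
  have hli : ∀ (st : ResidueField (A ⧸ I) × ResidueField (A ⧸ I)), st.1 • vf + st.2 • vg = 0 → st.1 = 0 ∧ st.2 = 0 := by
    rintro ⟨st1, st2⟩ hst
    obtain ⟨sa, rfl⟩ := IsLocalRing.residue_surjective st1
    obtain ⟨sb, rfl⟩ := IsLocalRing.residue_surjective st2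
    obtain ⟨a, rfl⟩ := Ideal.Quotient.mk_surjective sa
    obtain ⟨b, rfl⟩ := Ideal.Quotient.mk_surjective sb
    erw [htor.mk_smul, htor.mk_smul] at hst
    have hval : Ideal.Quotient.mk I a * Ideal.Quotient.mk I f +
        Ideal.Quotient.mk I b * Ideal.Quotient.mk I g = 0 := congrArg Subtype.val hst
    rw [← map_mul, ← map_mul, ← map_add, Ideal.Quotient.eq_zero_iff_mem] at hval
    obtain ⟨ham, hbm⟩ := hind a b hval
    constructor
    · exact hres0 a ham
    · exact hres0 b hbm
  have hli1 : LinearIndependent (ResidueField (A ⧸ I)) ![vf, vg] := by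
    rw [LinearIndependent.pair_iff]
    intro s' t' h'
    exact hli (s', t') h'
  have hli2 : LinearIndependent (ResidueField (A ⧸ I)) ![vg, vf] := by
    rw [LinearIndependent.pair_iff]
    intro s' t' h'
    have := hli (t', s') (by rw [add_comm]; exact h')
    exact ⟨this.2, this.1⟩
  obtain ⟨ℓ₁, hℓ₁f, hℓ₁g⟩ := exists_dual_pair hli1
  obtain ⟨ℓ₂, hℓ₂g, hℓ₂f⟩ := exists_dual_pair hli2
  -- assemble the derivations
  have hsm : ∀ (a : A) (x : ResidueField (A ⧸ I)), a • x = (Ideal.Quotient.mkₐ k I) a • x := by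
    intro a x
    exact (algebraMap_smul (A ⧸ I) a x).symm
  refine ⟨ResidueField (A ⧸ I), inferInstance, inferInstance, inferInstance, inferInstance,
    pullbackDerivation (Ideal.Quotient.mkₐ k I) hsm
      ((LinearMap.restrictScalars (A ⧸ I) ℓ₁).compDer D),
    pullbackDerivation (Ideal.Quotient.mkₐ k I) hsm
      ((LinearMap.restrictScalars (A ⧸ I) ℓ₂).compDer D), ?_, ?_, ?_, ?_⟩
  · show ℓ₁ (D (Ideal.Quotient.mk I f)) = 1
    rw [hDf]; exact hℓ₁f
  · show ℓ₁ (D (Ideal.Quotient.mk I g)) = 0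
    rw [hDg]; exact hℓ₁g
  · show ℓ₂ (D (Ideal.Quotient.mk I f)) = 0
    rw [hDf]; exact hℓ₂f
  · show ℓ₂ (D (Ideal.Quotient.mk I g)) = 1
    rw [hDg]; exact hℓ₂g


/-- If `(A, m)` is a local ring containing a field `k` of characteristic zero and
`f, g ∈ m` have linearly independent images in `m/m²`, then
`t·(df ∧ dg) + g·(df ∧ dt) ≠ 0` in `Ω²_{A[t]/k}`, i.e. `df ∧ d(gt) ≠ 0`
(formulated in the exterior algebra of `Ω_{A[t]/k}` over `A[t]`). -/
theorem t_dfdg_add_g_dfdt_ne_zero (k A : Type*) [Field k] [CharZero k] [CommRing A]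
    [Algebra k A] [IsLocalRing A]
    (f g : A) (hf : f ∈ maximalIdeal A) (hg : g ∈ maximalIdeal A)
    (hind : ∀ a b : A, a * f + b * g ∈ (maximalIdeal A) ^ 2 →
      a ∈ maximalIdeal A ∧ b ∈ maximalIdeal A) :
    (X : Polynomial A) • (ExteriorAlgebra.ι (Polynomial A)
          (KaehlerDifferential.D k (Polynomial A) (C f)) *
        ExteriorAlgebra.ι (Polynomial A)
          (KaehlerDifferential.D k (Polynomial A) (C g))) +
      (C g : Polynomial A) • (ExteriorAlgebra.ι (Polynomial A)
          (KaehlerDifferential.D k (Polynomial A) (C f)) *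
        ExteriorAlgebra.ι (Polynomial A)
          (KaehlerDifferential.D k (Polynomial A) X)) ≠ 0 := by
  classical
  obtain ⟨L, _, _, _, _, δ₁, δ₂, h1f, h1g, h2f, h2g⟩ :=
    key_derivations k A f g hf hg hind
  -- evaluation at 1 as a k-algebra hom
  let ψ : Polynomial A →ₐ[k] A := (Polynomial.aeval (1 : A)).restrictScalars k
  letI : Algebra (Polynomial A) L :=
    ((algebraMap A L).comp ((Polynomial.aeval (1 : A)).toRingHom : Polynomial A →+* A)).toAlgebra
  have hsmul : ∀ (p : Polynomial A) (x : L), p • x = ψ p • x := by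
    intro p x
    rw [Algebra.smul_def, Algebra.smul_def]
    rfl
  haveI : IsScalarTower k (Polynomial A) L := IsScalarTower.of_algebraMap_eq (fun c => by
    show algebraMap k L c = algebraMap A L (Polynomial.aeval (1:A) (algebraMap k (Polynomial A) c))
    rw [Polynomial.algebraMap_apply, Polynomial.aeval_C, IsScalarTower.algebraMap_apply k A L]
    simp)
  intro hzero
  have hFz := congrArg (ExteriorAlgebra.liftAlternating (R := Polynomial A)
    (wedgeFam (pullbackDerivation ψ hsmul δ₁).liftKaehlerDifferential
      (pullbackDerivation ψ hsmul δ₂).liftKaehlerDifferential)) hzero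
  rw [map_zero, map_add, map_smul, map_smul, liftAlternating_wedge, liftAlternating_wedge] at hFz
  have e1 : ∀ (δ : Derivation k A L) (a : A),
      (pullbackDerivation ψ hsmul δ).liftKaehlerDifferential
        (KaehlerDifferential.D k (Polynomial A) (C a)) = δ a := by
    intro δ a
    rw [Derivation.liftKaehlerDifferential_comp_D]
    show δ (ψ (C a)) = δ a
    congr 1
    simp [ψ]
  have e2 : ∀ (δ : Derivation k A L),
      (pullbackDerivation ψ hsmul δ).liftKaehlerDifferential
        (KaehlerDifferential.D k (Polynomial A) X) = 0 := by
    intro δ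
    rw [Derivation.liftKaehlerDifferential_comp_D]
    show δ (ψ X) = 0
    have : ψ (X : Polynomial A) = 1 := by simp [ψ]
    rw [this, Derivation.map_one_eq_zero]
  simp only [e1, e2, h1f, h1g, h2f, h2g] at hFz
  simp only [mul_one, one_mul, mul_zero, zero_mul, sub_zero, zero_sub, smul_zero, add_zero] at hFz
  rw [Algebra.smul_def] at hFz
  have hX1 : algebraMap (Polynomial A) L X = 1 := by
    show algebraMap A L (Polynomial.aeval (1:A) X) = 1
    simp
  rw [hX1, one_mul] at hFz
  exact one_ne_zero (α := L) hFz
end
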